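/- Under the standing assumptions, for all θ, θ' ∈ ℝ^d, every 0 < λ < 1 and every ε_h ∈ (0,1/2], the tamed coefficient is globally Lipschitz with constant L₀ λ^{−ε_h}: |h_λ(θ) − h_λ(θ')| ≤ L₀ λ^{−ε_h} |θ − θ'|, where L₀ := 2a + 4K_H + (l+1)(2K_h + a). -/

import Mathlib

/-!
Write `m(x) = (1 + λ x^r)^(-ε)` with `r = (l+1)/ε`, so that `h_λ(θ) = aθ + m(|θ|)(h(θ) - aθ)`.
Since `(λ x^r)^ε = λ^ε x^(l+1)`, we get `x^j m(x) ≤ λ^(-ε)` for every `j ≤ l+1`: the taming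
factor absorbs polynomial growth of degree `l+1` at the price `λ^(-ε)`. Moreover
`m'(x) = -(l+1) (λ x^(r-1) / (1 + λ x^r)) m(x)` and `λ x^(r-1) ≤ 1 + λ x^r` when `λ ≤ 1 ≤ r`,
so `|m'(x)| x^j ≤ (l+1) λ^(-ε)`. For `|θ'| ≤ |θ|` split
`h_λ(θ) - h_λ(θ') = a(θ-θ') + m(|θ|)(h(θ) - h(θ') - a(θ-θ')) + (m(|θ|) - m(|θ'|))(h(θ') - aθ')`:
the middle term is handled by the mean value theorem for `h` on the ball of radius `|θ|` and the
bound on `x^l m(x)`, the last one by the mean value theorem for `m` on `[|θ'|, |θ|]`.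
-/

open Real Set

noncomputable def tamingFactor (l : ℕ) (lam eps x : ℝ) : ℝ :=
  ((1 + lam * x ^ (((l : ℝ) + 1) / eps)) ^ eps)⁻¹

lemma one_le_one_add_mul_rpow {lam x : ℝ} (hlam : 0 ≤ lam) (hx : 0 ≤ x) (r : ℝ) :
    1 ≤ 1 + lam * x ^ r :=
  le_add_of_nonneg_right (mul_nonneg hlam (rpow_nonneg hx r))

lemma mul_rpow_sub_one_le_one_add_mul_rpow {lam x r : ℝ} (hlam0 : 0 ≤ lam) (hlam1 : lam ≤ 1)
    (hx : 0 ≤ x) (hr : 1 ≤ r) : lam * x ^ (r - 1) ≤ 1 + lam * x ^ r := by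
  have hpow : x ^ (r - 1) ≤ 1 + x ^ r := by
    rcases le_total x 1 with hx1 | hx1
    · linarith [rpow_le_one hx hx1 (sub_nonneg.2 hr), rpow_nonneg hx r]
    · linarith [rpow_le_rpow_of_exponent_le hx1 (sub_le_self r zero_le_one)]
  nlinarith [mul_le_mul_of_nonneg_left hpow hlam0]

section TamingFactor

variable {l : ℕ} {lam eps x : ℝ}

lemma tamingFactor_eq_rpow_neg (hlam : 0 ≤ lam) (hx : 0 ≤ x) :
    tamingFactor l lam eps x = (1 + lam * x ^ (((l : ℝ) + 1) / eps)) ^ (-eps) :=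
  (rpow_neg (zero_le_one.trans (one_le_one_add_mul_rpow hlam hx _)) eps).symm

lemma tamingFactor_nonneg (hlam : 0 ≤ lam) (hx : 0 ≤ x) : 0 ≤ tamingFactor l lam eps x := by
  rw [tamingFactor_eq_rpow_neg hlam hx]
  exact rpow_nonneg (zero_le_one.trans (one_le_one_add_mul_rpow hlam hx _)) _

lemma tamingFactor_le_one (hlam : 0 ≤ lam) (heps : 0 ≤ eps) (hx : 0 ≤ x) :
    tamingFactor l lam eps x ≤ 1 :=
  inv_le_one_of_one_le₀ (one_le_rpow (one_le_one_add_mul_rpow hlam hx _) heps)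

lemma pow_succ_mul_tamingFactor_le (hlam : 0 < lam) (heps : 0 < eps) (hx : 0 ≤ x) :
    x ^ (l + 1) * tamingFactor l lam eps x ≤ lam ^ (-eps) := by
  set G := 1 + lam * x ^ (((l : ℝ) + 1) / eps)
  have hG : 0 < G ^ eps :=
    rpow_pos_of_pos (zero_lt_one.trans_le (one_le_one_add_mul_rpow hlam.le hx _)) _
  have key : lam ^ eps * x ^ (l + 1) ≤ G ^ eps :=
    calc lam ^ eps * x ^ (l + 1) = (lam * x ^ (((l : ℝ) + 1) / eps)) ^ eps := by
          rw [mul_rpow hlam.le (rpow_nonneg hx _), ← rpow_mul hx, div_mul_cancel₀ _ heps.ne']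
          norm_cast
      _ ≤ G ^ eps := rpow_le_rpow (by positivity) (le_add_of_nonneg_left zero_le_one) heps.le
  rw [tamingFactor, ← div_eq_mul_inv, div_le_iff₀ hG, rpow_neg hlam.le, inv_mul_eq_div,
    le_div_iff₀ (rpow_pos_of_pos hlam eps)]
  linarith

lemma pow_mul_tamingFactor_le {j : ℕ} (hj : j ≤ l + 1) (hlam0 : 0 < lam) (hlam1 : lam ≤ 1)
    (heps : 0 < eps) (hx : 0 ≤ x) : x ^ j * tamingFactor l lam eps x ≤ lam ^ (-eps) := by
  rcases le_total x 1 with hx1 | hx1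
  · calc x ^ j * tamingFactor l lam eps x ≤ 1 * 1 :=
          mul_le_mul (pow_le_one₀ hx hx1) (tamingFactor_le_one hlam0.le heps.le hx)
            (tamingFactor_nonneg hlam0.le hx) zero_le_one
      _ ≤ lam ^ (-eps) := by
          rw [one_mul]
          exact one_le_rpow_of_pos_of_le_one_of_nonpos hlam0 hlam1 (neg_nonpos.2 heps.le)
  · calc x ^ j * tamingFactor l lam eps x ≤ x ^ (l + 1) * tamingFactor l lam eps x := by
          gcongr
          exact tamingFactor_nonneg hlam0.le hx
      _ ≤ lam ^ (-eps) := pow_succ_mul_tamingFactor_le hlam0 heps hx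

lemma hasDerivWithinAt_tamingFactor (hlam : 0 ≤ lam) (heps : 0 < eps) (hepsl : eps ≤ l + 1)
    (hx : 0 ≤ x) :
    HasDerivWithinAt (tamingFactor l lam eps)
      (-(((l : ℝ) + 1) * (lam * x ^ (((l : ℝ) + 1) / eps - 1) /
        (1 + lam * x ^ (((l : ℝ) + 1) / eps))) * tamingFactor l lam eps x)) (Ici 0) x := by
  set r := ((l : ℝ) + 1) / eps with hr
  have hr1 : 1 ≤ r := by rw [hr, le_div_iff₀ heps]; linarith
  have hG : 0 < 1 + lam * x ^ r := zero_lt_one.trans_le (one_le_one_add_mul_rpow hlam hx r)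
  have hd := (((hasDerivAt_rpow_const (Or.inr hr1)).const_mul lam).const_add 1).rpow_const
    (p := -eps) (Or.inl hG.ne')
  refine (hd.hasDerivWithinAt.congr_of_mem (fun y hy => tamingFactor_eq_rpow_neg hlam hy)
    hx).congr_deriv ?_
  rw [tamingFactor_eq_rpow_neg hlam hx, rpow_sub_one hG.ne', hr]
  field_simp

lemma abs_tamingFactor_sub_mul_pow_le {j : ℕ} (hj : j ≤ l + 1) {s t : ℝ} (hlam0 : 0 < lam)
    (hlam1 : lam ≤ 1) (heps : 0 < eps) (hepsl : eps ≤ l + 1) (ht : 0 ≤ t) (hts : t ≤ s) :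
    |tamingFactor l lam eps s - tamingFactor l lam eps t| * t ^ j ≤
      ((l : ℝ) + 1) * lam ^ (-eps) * (s - t) := by
  have hsub : Icc t s ⊆ Ici 0 := fun y hy => ht.trans hy.1
  have key := norm_image_sub_le_of_norm_deriv_le_segment'
    (f := fun y => tamingFactor l lam eps y * t ^ j) (C := ((l : ℝ) + 1) * lam ^ (-eps))
    (fun y hy => ((hasDerivWithinAt_tamingFactor hlam0.le heps hepsl (hsub hy)).mono
      hsub).mul_const (t ^ j)) ?_ s (right_mem_Icc.2 hts)
  · simpa only [← sub_mul, norm_mul, Real.norm_eq_abs, abs_of_nonneg (pow_nonneg ht j)] using key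
  intro y hy
  have hy0 : 0 ≤ y := ht.trans hy.1
  set r := ((l : ℝ) + 1) / eps with hr
  have hr1 : 1 ≤ r := by rw [hr, le_div_iff₀ heps]; linarith
  have hG : 0 < 1 + lam * y ^ r := zero_lt_one.trans_le (one_le_one_add_mul_rpow hlam0.le hy0 r)
  have hq0 : 0 ≤ lam * y ^ (r - 1) / (1 + lam * y ^ r) := by
    have := rpow_nonneg hy0 (r - 1); positivity
  have hq1 : lam * y ^ (r - 1) / (1 + lam * y ^ r) ≤ 1 :=
    div_le_one_of_le₀ (mul_rpow_sub_one_le_one_add_mul_rpow hlam0.le hlam1 hy0 hr1) hG.le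
  have hm0 : 0 ≤ tamingFactor l lam eps y := tamingFactor_nonneg hlam0.le hy0
  have hm : t ^ j * tamingFactor l lam eps y ≤ lam ^ (-eps) :=
    (mul_le_mul_of_nonneg_right (pow_le_pow_left₀ ht hy.1 j) hm0).trans
      (pow_mul_tamingFactor_le hj hlam0 hlam1 heps hy0)
  have ht0 : 0 ≤ t ^ j := pow_nonneg ht j
  rw [norm_mul, norm_neg, Real.norm_of_nonneg (by positivity), Real.norm_of_nonneg ht0]
  calc ((l : ℝ) + 1) * (lam * y ^ (r - 1) / (1 + lam * y ^ r)) * tamingFactor l lam eps y * t ^ j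
      = ((l : ℝ) + 1) * (lam * y ^ (r - 1) / (1 + lam * y ^ r)) *
          (t ^ j * tamingFactor l lam eps y) := by ring
    _ ≤ ((l : ℝ) + 1) * 1 * lam ^ (-eps) := by gcongr
    _ = ((l : ℝ) + 1) * lam ^ (-eps) := by ring

lemma abs_tamingFactor_sub_mul_le {K c s t : ℝ} (hK : 0 ≤ K) (hc : 0 ≤ c) (hlam0 : 0 < lam)
    (hlam1 : lam ≤ 1) (heps : 0 < eps) (hepsl : eps ≤ l + 1) (ht : 0 ≤ t) (hts : t ≤ s) :
    |tamingFactor l lam eps s - tamingFactor l lam eps t| * (K * (1 + t ^ (l + 1)) + c * t) ≤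
      ((l : ℝ) + 1) * (2 * K + c) * lam ^ (-eps) * (s - t) := by
  set Δ := |tamingFactor l lam eps s - tamingFactor l lam eps t|
  set B := ((l : ℝ) + 1) * lam ^ (-eps) * (s - t)
  have h₀ : Δ * t ^ 0 ≤ B :=
    abs_tamingFactor_sub_mul_pow_le (Nat.zero_le _) hlam0 hlam1 heps hepsl ht hts
  have h₁ : Δ * t ^ 1 ≤ B :=
    abs_tamingFactor_sub_mul_pow_le (Nat.le_add_left _ _) hlam0 hlam1 heps hepsl ht hts
  have hₗ : Δ * t ^ (l + 1) ≤ B :=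
    abs_tamingFactor_sub_mul_pow_le le_rfl hlam0 hlam1 heps hepsl ht hts
  calc Δ * (K * (1 + t ^ (l + 1)) + c * t)
      = K * (Δ * t ^ 0) + K * (Δ * t ^ (l + 1)) + c * (Δ * t ^ 1) := by ring
    _ ≤ K * B + K * B + c * B := by gcongr
    _ = ((l : ℝ) + 1) * (2 * K + c) * lam ^ (-eps) * (s - t) := by ring

end TamingFactor

section TamedDrift

variable {E F : Type*} [NormedAddCommGroup E] [NormedSpace ℝ E] [NormedAddCommGroup F]
  [NormedSpace ℝ F]

lemma norm_sub_le_of_norm_fderiv_le_of_norm_le {f : E → F} (hf : Differentiable ℝ f) {C R : ℝ}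
    (bound : ∀ x, ‖x‖ ≤ R → ‖fderiv ℝ f x‖ ≤ C) {x y : E} (hx : ‖x‖ ≤ R) (hy : ‖y‖ ≤ R) :
    ‖f x - f y‖ ≤ C * ‖x - y‖ := by
  have hball : ∀ z : E, z ∈ Metric.closedBall 0 R ↔ ‖z‖ ≤ R := fun z => mem_closedBall_zero_iff
  exact (convex_closedBall 0 R).norm_image_sub_le_of_norm_fderiv_le (fun z _ => hf z)
    (fun z hz => bound z ((hball z).1 hz)) ((hball y).2 hy) ((hball x).2 hx)

noncomputable def tamedDrift (h : E → E) (a : ℝ) (l : ℕ) (lam eps : ℝ) (θ : E) : E :=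
  a • θ + tamingFactor l lam eps ‖θ‖ • (h θ - a • θ)

lemma norm_tamingFactor_smul_sub_le {h : E → E} {a K_H : ℝ} {l : ℕ} {lam eps : ℝ} (ha : 0 ≤ a)
    (hK_H : 0 ≤ K_H) (hdiff : Differentiable ℝ h)
    (hh' : ∀ θ, ‖fderiv ℝ h θ‖ ≤ K_H * (1 + ‖θ‖ ^ l))
    (hlam0 : 0 < lam) (hlam1 : lam ≤ 1) (heps : 0 < eps) {θ θ' : E} (hθ : ‖θ'‖ ≤ ‖θ‖) :
    ‖tamingFactor l lam eps ‖θ‖ • ((h θ - h θ') - a • (θ - θ'))‖ ≤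
      (2 * K_H + a) * lam ^ (-eps) * ‖θ - θ'‖ := by
  set m := tamingFactor l lam eps ‖θ‖
  set n := ‖θ - θ'‖
  have hlip : ‖h θ - h θ'‖ ≤ K_H * (1 + ‖θ‖ ^ l) * n :=
    norm_sub_le_of_norm_fderiv_le_of_norm_le hdiff
      (fun x hx => (hh' x).trans (by gcongr)) le_rfl hθ
  have hv : ‖(h θ - h θ') - a • (θ - θ')‖ ≤ K_H * (1 + ‖θ‖ ^ l) * n + a * n := by
    refine (norm_sub_le _ _).trans (add_le_add hlip ?_)
    rw [norm_smul, Real.norm_of_nonneg ha]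
  have hm0 : 0 ≤ m := tamingFactor_nonneg hlam0.le (norm_nonneg θ)
  have hm : ‖θ‖ ^ 0 * m ≤ lam ^ (-eps) :=
    pow_mul_tamingFactor_le (Nat.zero_le _) hlam0 hlam1 heps (norm_nonneg θ)
  have hml : ‖θ‖ ^ l * m ≤ lam ^ (-eps) :=
    pow_mul_tamingFactor_le (Nat.le_succ l) hlam0 hlam1 heps (norm_nonneg θ)
  rw [pow_zero, one_mul] at hm
  rw [norm_smul, Real.norm_of_nonneg hm0]
  calc m * ‖(h θ - h θ') - a • (θ - θ')‖
      ≤ m * (K_H * (1 + ‖θ‖ ^ l) * n + a * n) := by gcongr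
    _ = (K_H * (m + ‖θ‖ ^ l * m) + a * m) * n := by ring
    _ ≤ (K_H * (lam ^ (-eps) + lam ^ (-eps)) + a * lam ^ (-eps)) * n := by gcongr
    _ = (2 * K_H + a) * lam ^ (-eps) * n := by ring

lemma norm_tamingFactor_sub_smul_le {h : E → E} {a K_h : ℝ} {l : ℕ} {lam eps : ℝ} (ha : 0 ≤ a)
    (hK_h : 0 ≤ K_h) (hh : ∀ θ, ‖h θ‖ ≤ K_h * (1 + ‖θ‖ ^ (l + 1)))
    (hlam0 : 0 < lam) (hlam1 : lam ≤ 1) (heps : 0 < eps) (hepsl : eps ≤ l + 1) {θ θ' : E}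
    (hθ : ‖θ'‖ ≤ ‖θ‖) :
    ‖(tamingFactor l lam eps ‖θ‖ - tamingFactor l lam eps ‖θ'‖) • (h θ' - a • θ')‖ ≤
      ((l : ℝ) + 1) * (2 * K_h + a) * lam ^ (-eps) * ‖θ - θ'‖ := by
  set Δ := |tamingFactor l lam eps ‖θ‖ - tamingFactor l lam eps ‖θ'‖|
  have hv : ‖h θ' - a • θ'‖ ≤ K_h * (1 + ‖θ'‖ ^ (l + 1)) + a * ‖θ'‖ := by
    refine (norm_sub_le _ _).trans (add_le_add (hh θ') ?_)
    rw [norm_smul, Real.norm_of_nonneg ha]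
  rw [norm_smul, Real.norm_eq_abs]
  calc Δ * ‖h θ' - a • θ'‖
      ≤ Δ * (K_h * (1 + ‖θ'‖ ^ (l + 1)) + a * ‖θ'‖) := by gcongr
    _ ≤ ((l : ℝ) + 1) * (2 * K_h + a) * lam ^ (-eps) * (‖θ‖ - ‖θ'‖) :=
      abs_tamingFactor_sub_mul_le hK_h ha hlam0 hlam1 heps hepsl (norm_nonneg θ') hθ
    _ ≤ ((l : ℝ) + 1) * (2 * K_h + a) * lam ^ (-eps) * ‖θ - θ'‖ := by
      gcongr
      exact norm_sub_norm_le θ θ'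

lemma norm_tamedDrift_sub_le {h : E → E} {a K_H K_h : ℝ} {l : ℕ} {lam eps : ℝ} (ha : 0 ≤ a)
    (hK_H : 0 ≤ K_H) (hK_h : 0 ≤ K_h) (hdiff : Differentiable ℝ h)
    (hh' : ∀ θ, ‖fderiv ℝ h θ‖ ≤ K_H * (1 + ‖θ‖ ^ l))
    (hh : ∀ θ, ‖h θ‖ ≤ K_h * (1 + ‖θ‖ ^ (l + 1)))
    (hlam0 : 0 < lam) (hlam1 : lam ≤ 1) (heps : 0 < eps) (hepsl : eps ≤ l + 1) (θ θ' : E) :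
    ‖tamedDrift h a l lam eps θ - tamedDrift h a l lam eps θ'‖ ≤
      (2 * a + 2 * K_H + ((l : ℝ) + 1) * (2 * K_h + a)) * lam ^ (-eps) * ‖θ - θ'‖ := by
  wlog hθ : ‖θ'‖ ≤ ‖θ‖ generalizing θ θ'
  · rw [norm_sub_rev, norm_sub_rev θ]
    exact this θ' θ (le_of_not_ge hθ)
  set m := tamingFactor l lam eps
  set Φ := lam ^ (-eps)
  set n := ‖θ - θ'‖
  have hΦ : 1 ≤ Φ := one_le_rpow_of_pos_of_le_one_of_nonpos hlam0 hlam1 (neg_nonpos.2 heps.le)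
  calc ‖tamedDrift h a l lam eps θ - tamedDrift h a l lam eps θ'‖
      = ‖a • (θ - θ') + m ‖θ‖ • ((h θ - h θ') - a • (θ - θ')) +
          (m ‖θ‖ - m ‖θ'‖) • (h θ' - a • θ')‖ := by
        rw [tamedDrift, tamedDrift]
        congr 1
        module
    _ ≤ ‖a • (θ - θ')‖ + ‖m ‖θ‖ • ((h θ - h θ') - a • (θ - θ'))‖ +
          ‖(m ‖θ‖ - m ‖θ'‖) • (h θ' - a • θ')‖ := norm_add₃_le
    _ ≤ a * Φ * n + (2 * K_H + a) * Φ * n + ((l : ℝ) + 1) * (2 * K_h + a) * Φ * n := by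
        gcongr
        · rw [norm_smul, Real.norm_of_nonneg ha]
          exact mul_le_mul_of_nonneg_right (le_mul_of_one_le_right ha hΦ) (norm_nonneg _)
        · exact norm_tamingFactor_smul_sub_le ha hK_H hdiff hh' hlam0 hlam1 heps hθ
        · exact norm_tamingFactor_sub_smul_le ha hK_h hh hlam0 hlam1 heps hepsl hθ
    _ = (2 * a + 2 * K_H + ((l : ℝ) + 1) * (2 * K_h + a)) * Φ * n := by ring

end TamedDrift

theorem kTULA_tamed_lipschitz_general
    {d : ℕ}
    (u : EuclideanSpace ℝ (Fin d) → ℝ) (hu : ContDiff ℝ 3 u)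
    (h : EuclideanSpace ℝ (Fin d) → EuclideanSpace ℝ (Fin d))
    (H : EuclideanSpace ℝ (Fin d) →
      EuclideanSpace ℝ (Fin d) →L[ℝ] EuclideanSpace ℝ (Fin d))
    (hgrad : ∀ θ, h θ = gradient u θ)
    (hHess : ∀ θ, H θ = fderiv ℝ (gradient u) θ)
    (L K_H K_h a : ℝ)
    (hK_H : 0 < K_H) (hK_h : 0 < K_h) (ha : 0 < a)
    (l : ℕ)
    (hH_bd : ∀ θ : EuclideanSpace ℝ (Fin d), ‖H θ‖ ≤ K_H * (1 + ‖θ‖ ^ l))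
    (hh_bd : ∀ θ : EuclideanSpace ℝ (Fin d), ‖h θ‖ ≤ K_h * (1 + ‖θ‖ ^ (l + 1)))
    (hlam : ℝ → ℝ → EuclideanSpace ℝ (Fin d) → EuclideanSpace ℝ (Fin d))
    (hlam_def : ∀ (lam eps : ℝ) (θ : EuclideanSpace ℝ (Fin d)),
      hlam lam eps θ =
        a • θ + ((1 + lam * ‖θ‖ ^ (((l : ℝ) + 1) / eps)) ^ eps)⁻¹ • (h θ - a • θ)) :
    ∀ (θ θ' : EuclideanSpace ℝ (Fin d)) (lam eps : ℝ),
      0 < lam → lam < 1 → 0 < eps → eps ≤ 1 / 2 →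
      ‖hlam lam eps θ - hlam lam eps θ'‖ ≤
        (2 * a + 4 * K_H + ((l : ℝ) + 1) * (2 * K_h + a)) * lam ^ (-eps) * ‖θ - θ'‖ := by
  have hh : h = gradient u := funext hgrad
  have hdiff : Differentiable ℝ h := by
    rw [hh]
    exact (InnerProductSpace.toDual ℝ _).symm.differentiable.comp
      ((hu.fderiv_right (by norm_num : (1 : WithTop ℕ∞) + 1 ≤ 3)).differentiable one_ne_zero)
  have hh' : ∀ θ, ‖fderiv ℝ h θ‖ ≤ K_H * (1 + ‖θ‖ ^ l) := fun θ => by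
    rw [hh, ← hHess]
    exact hH_bd θ
  intro θ θ' lam eps hlam0 hlam1 heps heps2
  have hdrift : hlam lam eps = tamedDrift h a l lam eps := funext (hlam_def lam eps)
  rw [hdrift]
  calc ‖tamedDrift h a l lam eps θ - tamedDrift h a l lam eps θ'‖
      ≤ (2 * a + 2 * K_H + ((l : ℝ) + 1) * (2 * K_h + a)) * lam ^ (-eps) * ‖θ - θ'‖ :=
        norm_tamedDrift_sub_le ha.le hK_H.le hK_h.le hdiff hh' hh_bd hlam0 hlam1.le heps
          (by linarith [(Nat.cast_nonneg l : (0 : ℝ) ≤ l)]) θ θ'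
    _ ≤ (2 * a + 4 * K_H + ((l : ℝ) + 1) * (2 * K_h + a)) * lam ^ (-eps) * ‖θ - θ'‖ := by
        gcongr
        linarith

theorem kTULA_tamed_lipschitz
    {d : ℕ} (hd : 0 < d)
    (u : EuclideanSpace ℝ (Fin d) → ℝ) (hu : ContDiff ℝ 3 u)
    (h : EuclideanSpace ℝ (Fin d) → EuclideanSpace ℝ (Fin d))
    (H : EuclideanSpace ℝ (Fin d) →
      EuclideanSpace ℝ (Fin d) →L[ℝ] EuclideanSpace ℝ (Fin d))
    (hgrad : ∀ θ, h θ = gradient u θ)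
    (hHess : ∀ θ, H θ = fderiv ℝ (gradient u) θ)
    (L K_H K_h a b : ℝ)
    (hL : 0 < L) (hK_H : 0 < K_H) (hK_h : 0 < K_h) (ha : 0 < a) (hb : 0 < b)
    (l : ℕ) (hl : 1 ≤ l)
    (hH_lip : ∀ θ θ' : EuclideanSpace ℝ (Fin d),
      ‖H θ - H θ'‖ ≤ L * (1 + ‖θ‖ + ‖θ'‖) ^ (l - 1) * ‖θ - θ'‖)
    (hH_bd : ∀ θ : EuclideanSpace ℝ (Fin d), ‖H θ‖ ≤ K_H * (1 + ‖θ‖ ^ l))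
    (hh_bd : ∀ θ : EuclideanSpace ℝ (Fin d), ‖h θ‖ ≤ K_h * (1 + ‖θ‖ ^ (l + 1)))
    (hdiss : ∀ θ : EuclideanSpace ℝ (Fin d), a * ‖θ‖ ^ 2 - b ≤ (inner ℝ (h θ) θ : ℝ))
    (hlam : ℝ → ℝ → EuclideanSpace ℝ (Fin d) → EuclideanSpace ℝ (Fin d))
    (hlam_def : ∀ (lam eps : ℝ) (θ : EuclideanSpace ℝ (Fin d)),
      hlam lam eps θ =
        a • θ + ((1 + lam * ‖θ‖ ^ (((l : ℝ) + 1) / eps)) ^ eps)⁻¹ • (h θ - a • θ)) :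
    ∀ (θ θ' : EuclideanSpace ℝ (Fin d)) (lam eps : ℝ),
      0 < lam → lam < 1 → 0 < eps → eps ≤ 1 / 2 →
      ‖hlam lam eps θ - hlam lam eps θ'‖ ≤
        (2 * a + 4 * K_H + ((l : ℝ) + 1) * (2 * K_h + a)) * lam ^ (-eps) * ‖θ - θ'‖ :=
  kTULA_tamed_lipschitz_general u hu h H hgrad hHess L K_H K_h a hK_H hK_h ha l hH_bd hh_bd hlam
    hlam_def
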